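/- arXiv:1402.2587 — 5 statements merged into one kernel-verified Lean document; each statement's English description precedes it below -/
import Mathlib

section
/- The string rewriting system on {x, y} with rules xyx → yy and yyyx → xyyy is confluent: all its critical branchings are confluent, hence by Newman's lemma (using termination) it is confluent. -/
/-
Comparing `1w` as binary numerals (`x = 0`, `y = 1`) is the deglex order, and both rules decrease
it in every context, so the system terminates. By Newman's lemma it remains to join the critical
branchings: the overlaps `xyxyx` and `yyyxyx`, the latter via `xyyyyx → xyxyyy → yyyyy`.
-/

/-- The two-letter alphabet {x, y}. -/
inductive XY : Type
  | x : XY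
  | y : XY

open XY

/-- One step of string rewriting for a set of rules `R`: replace a factor `l`
of a word by `r`, i.e. `p ++ l ++ s → p ++ r ++ s` for a rule `(l, r) ∈ R`. -/
def StringStep {A : Type*} (R : Set (List A × List A)) (u v : List A) : Prop :=
  ∃ p l r s : List A, (l, r) ∈ R ∧ u = p ++ l ++ s ∧ v = p ++ r ++ s

open Relation

theorem Relation.newman {α : Type*} {r : α → α → Prop} (hwf : WellFounded (flip r))
    (hlc : ∀ {a b c}, r a b → r a c → Join (ReflTransGen r) b c) {a b c : α}
    (hab : ReflTransGen r a b) (hac : ReflTransGen r a c) : Join (ReflTransGen r) b c := by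
  induction a using hwf.induction generalizing b c with
  | _ a ih =>
    rcases hab.cases_head with rfl | ⟨b₁, hab₁, hb₁b⟩
    · exact ⟨c, hac, .refl⟩
    rcases hac.cases_head with rfl | ⟨c₁, hac₁, hc₁c⟩
    · exact ⟨b, .refl, hab⟩
    obtain ⟨d, hb₁d, hc₁d⟩ := hlc hab₁ hac₁
    obtain ⟨e, hbe, hde⟩ := ih b₁ hab₁ hb₁b hb₁d
    obtain ⟨f, hef, hcf⟩ := ih c₁ hac₁ (hc₁d.trans hde) hc₁c
    exact ⟨f, hbe.trans hef, hcf⟩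

theorem List.exists_common_suffix_of_append_eq {α : Type*} {l₁ s₁ m s₂ : List α}
    (h : l₁ ++ s₁ = m ++ s₂) :
    ∃ s₁' s₂' s, s₁ = s₁' ++ s ∧ s₂ = s₂' ++ s ∧ l₁ ++ s₁' = m ++ s₂' ∧ (s₁' = [] ∨ s₂' = []) := by
  rcases List.append_eq_append_iff.1 h with ⟨t, rfl, rfl⟩ | ⟨t, rfl, rfl⟩
  · exact ⟨t, [], s₂, rfl, rfl, by simp, .inr rfl⟩
  · exact ⟨[], t, s₁, rfl, rfl, by simp, .inl rfl⟩

namespace StringStep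

variable {A : Type*} {R : Set (List A × List A)}

theorem of_mem {l r : List A} (p s : List A) (h : (l, r) ∈ R) :
    StringStep R (p ++ l ++ s) (p ++ r ++ s) :=
  ⟨p, l, r, s, h, rfl, rfl⟩

theorem append_left_right {u v : List A} (p s : List A) (h : StringStep R u v) :
    StringStep R (p ++ u ++ s) (p ++ v ++ s) := by
  obtain ⟨p', l, r, s', hR, rfl, rfl⟩ := h
  simpa only [List.append_assoc] using of_mem (p ++ p') (s' ++ s) hR

theorem join_append_left_right {u v : List A} (p s : List A)
    (h : Join (ReflTransGen (StringStep R)) u v) :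
    Join (ReflTransGen (StringStep R)) (p ++ u ++ s) (p ++ v ++ s) :=
  let ⟨w, huw, hvw⟩ := h
  have lift := ReflTransGen.lift (fun w ↦ p ++ w ++ s) fun _ _ ↦ append_left_right p s
  ⟨p ++ w ++ s, lift _ _ huw, lift _ _ hvw⟩

theorem join_of_disjoint {l₁ r₁ l₂ r₂ : List A} (m : List A) (h₁ : (l₁, r₁) ∈ R)
    (h₂ : (l₂, r₂) ∈ R) :
    Join (ReflTransGen (StringStep R)) (r₁ ++ m ++ l₂) (l₁ ++ m ++ r₂) :=
  ⟨r₁ ++ m ++ r₂, .single (by simpa using of_mem (r₁ ++ m) [] h₂),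
    .single (by simpa using of_mem [] (m ++ r₂) h₁)⟩

/-- A critical branching is encoded as two steps on `l₁ ++ s₁ = q ++ l₂ ++ s₂` whose redexes
overlap (`q.length < l₁.length`) and together cover the word (`s₁ = [] ∨ s₂ = []`). -/
def CriticalPairsJoinable (R : Set (List A × List A)) : Prop :=
  ∀ ⦃l₁ r₁ l₂ r₂ q s₁ s₂ : List A⦄, (l₁, r₁) ∈ R → (l₂, r₂) ∈ R → l₁ ++ s₁ = q ++ l₂ ++ s₂ →
    q.length < l₁.length → s₁ = [] ∨ s₂ = [] →
    Join (ReflTransGen (StringStep R)) (r₁ ++ s₁) (q ++ r₂ ++ s₂)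

theorem join_of_append_eq (hcrit : CriticalPairsJoinable R) {l₁ r₁ l₂ r₂ q s₁ s₂ : List A}
    (h₁ : (l₁, r₁) ∈ R) (h₂ : (l₂, r₂) ∈ R) (heq : l₁ ++ s₁ = q ++ l₂ ++ s₂) :
    Join (ReflTransGen (StringStep R)) (r₁ ++ s₁) (q ++ r₂ ++ s₂) := by
  rcases le_or_gt l₁.length q.length with hdisj | hq
  · obtain ⟨m, rfl⟩ : l₁ <+: q :=
      List.prefix_of_prefix_length_le ⟨s₁, heq⟩ ⟨l₂ ++ s₂, by simp⟩ hdisj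
    obtain rfl : s₁ = m ++ l₂ ++ s₂ := by simpa using heq
    simpa using join_append_left_right [] s₂ (join_of_disjoint m h₁ h₂)
  · obtain ⟨s₁', s₂', s, rfl, rfl, heq', hmin⟩ := List.exists_common_suffix_of_append_eq heq
    simpa using join_append_left_right [] s (hcrit h₁ h₂ heq' hq hmin)

theorem join_of_criticalPairsJoinable (hcrit : CriticalPairsJoinable R) {a b c : List A}
    (hab : StringStep R a b) (hac : StringStep R a c) : Join (ReflTransGen (StringStep R)) b c := by
  obtain ⟨p₁, l₁, r₁, s₁, h₁, rfl, rfl⟩ := hab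
  obtain ⟨p₂, l₂, r₂, s₂, h₂, heq, rfl⟩ := hac
  simp only [List.append_assoc] at heq
  rcases List.append_eq_append_iff.1 heq with ⟨q, rfl, hq⟩ | ⟨q, rfl, hq⟩
  · simpa using join_append_left_right p₁ [] (join_of_append_eq hcrit h₁ h₂ (by simpa using hq))
  · obtain ⟨d, hd₂, hd₁⟩ :=
      join_append_left_right p₂ [] (join_of_append_eq hcrit h₂ h₁ (by simpa using hq))
    exact ⟨d, by simpa using hd₁, by simpa using hd₂⟩

end StringStep

abbrev xyRules : Set (List XY × List XY) := {([x, y, x], [y, y]), ([y, y, y, x], [x, y, y, y])}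

def XY.bit : XY → ℕ
  | x => 0
  | y => 1

def binaryValue (n : ℕ) (w : List XY) : ℕ :=
  w.foldl (fun n a ↦ 2 * n + a.bit) n

theorem binaryValue_append (n : ℕ) (u w : List XY) :
    binaryValue n (u ++ w) = binaryValue (binaryValue n u) w :=
  List.foldl_append

theorem binaryValue_strictMono (w : List XY) : StrictMono (binaryValue · w) := by
  induction w with
  | nil => exact strictMono_id
  | cons a w ih => exact ih.comp fun m n h ↦ by dsimp only; omega

theorem le_binaryValue (n : ℕ) (w : List XY) : n ≤ binaryValue n w := by
  induction w generalizing n with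
  | nil => exact le_rfl
  | cons a w ih => exact (by omega : n ≤ 2 * n + a.bit).trans (ih _)

theorem binaryValue_lt_of_mem_xyRules {l r : List XY} (h : (l, r) ∈ xyRules) {n : ℕ}
    (hn : 1 ≤ n) :
    binaryValue n r < binaryValue n l := by
  simp only [Set.mem_insert_iff, Set.mem_singleton_iff, Prod.mk.injEq] at h
  rcases h with ⟨rfl, rfl⟩ | ⟨rfl, rfl⟩ <;> simp only [binaryValue, XY.bit, List.foldl] <;> omega

theorem binaryValue_lt_of_stringStep {u v : List XY} (h : StringStep xyRules u v) :
    binaryValue 1 v < binaryValue 1 u := by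
  obtain ⟨p, l, r, s, hR, rfl, rfl⟩ := h
  simp only [binaryValue_append]
  exact binaryValue_strictMono s (binaryValue_lt_of_mem_xyRules hR (le_binaryValue 1 p))

theorem wellFounded_flip_stringStep_xyRules : WellFounded (flip (StringStep xyRules)) :=
  Subrelation.wf binaryValue_lt_of_stringStep (measure (binaryValue 1)).wf

theorem xyx_mem_xyRules : ([x, y, x], [y, y]) ∈ xyRules := .inl rfl

theorem yyyx_mem_xyRules : ([y, y, y, x], [x, y, y, y]) ∈ xyRules := .inr rfl

theorem join_xyxyx : Join (ReflTransGen (StringStep xyRules)) [y, y, y, x] [x, y, y, y] :=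
  ⟨[x, y, y, y], .single (StringStep.of_mem [] [] yyyx_mem_xyRules), .refl⟩

theorem join_yyyxyx :
    Join (ReflTransGen (StringStep xyRules)) [x, y, y, y, y, x] [y, y, y, y, y] :=
  ⟨[y, y, y, y, y],
    .head (StringStep.of_mem [x, y] [] yyyx_mem_xyRules)
      (.single (StringStep.of_mem [] [y, y, y] xyx_mem_xyRules)),
    .refl⟩

theorem criticalPairsJoinable_xyRules : StringStep.CriticalPairsJoinable xyRules := by
  intro l₁ r₁ l₂ r₂ q s₁ s₂ h₁ h₂ heq hq hmin
  simp only [Set.mem_insert_iff, Set.mem_singleton_iff, Prod.mk.injEq] at h₁ h₂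
  rcases h₁ with ⟨rfl, rfl⟩ | ⟨rfl, rfl⟩ <;> rcases h₂ with ⟨rfl, rfl⟩ | ⟨rfl, rfl⟩ <;>
    rcases hmin with rfl | rfl <;> simp [List.cons_eq_append_iff] at heq hq <;>
    aesop (add safe apply [join_xyxyx, join_yyyxyx, refl]) (add safe (by omega))

/-- The string rewriting system on {x, y} with rules xyx → yy and
yyyx → xyyy is confluent. -/
theorem xyx_yy_completion_confluent :
    ∀ a b c : List XY,
      Relation.ReflTransGen
        (StringStep ({([x, y, x], [y, y]), ([y, y, y, x], [x, y, y, y])} :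
          Set (List XY × List XY))) a b →
      Relation.ReflTransGen
        (StringStep ({([x, y, x], [y, y]), ([y, y, y, x], [x, y, y, y])} :
          Set (List XY × List XY))) a c →
      ∃ d : List XY,
        Relation.ReflTransGen
          (StringStep ({([x, y, x], [y, y]), ([y, y, y, x], [x, y, y, y])} :
            Set (List XY × List XY))) b d ∧
        Relation.ReflTransGen
          (StringStep ({([x, y, x], [y, y]), ([y, y, y, x], [x, y, y, y])} :
            Set (List XY × List XY))) c d := by
  intro a b c hab hac
  exact Relation.newman wellFounded_flip_stringStep_xyRules
    (StringStep.join_of_criticalPairsJoinable criticalPairsJoinable_xyRules) hab hac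
end

section
/- Let M be a monoid generated by a set X (i.e., every element of M is a product of elements of X). Define the left ℤM-module map d₁ : ℤM[X] → ℤM on the free module over X by d₁[x] = x − 1. Then the image of d₁ equals the augmentation ideal ker ε, where ε : ℤM → ℤ is the augmentation. In particular every generated monoid M yields an exact sequence ℤM[X] → ℤM → ℤ → 0. -/
/-!
The augmentation `ε` kills every `m - 1`, and each `f` differs from `ε f • 1` by
`∑ f(m) • (m - 1)`, so `ker ε` is the left ideal spanned by all `m - 1`. The identity
`ab - 1 = a(b - 1) + (a - 1)` shows that this ideal is already spanned by the `x - 1`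
for `x` in a generating set.
-/

namespace MonoidAlgebra

variable {k M : Type*} [CommRing k] [Monoid M]

theorem lift_one_surjective : Function.Surjective (lift k k M 1) :=
  fun a => ⟨algebraMap k _ a, by simp⟩

theorem sub_algebraMap_lift_one_mem_span (f : MonoidAlgebra k M) :
    f - algebraMap k _ (lift k k M 1 f) ∈ Ideal.span (Set.range fun m => of k M m - 1) := by
  induction f using induction_linear with
  | zero => simp
  | add f g hf hg =>
    rw [map_add, map_add, add_sub_add_comm]
    exact add_mem hf hg
  | single m a =>
    have hsingle : single m a - algebraMap k _ (lift k k M 1 (single m a)) =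
        a • (of k M m - 1) := by
      simp [smul_sub, Algebra.algebraMap_eq_smul_one, of_apply]
    rw [hsingle]
    exact Submodule.smul_of_tower_mem _ a (Ideal.subset_span ⟨m, rfl⟩)

theorem ker_lift_one_eq_span :
    RingHom.ker (lift k k M 1).toRingHom = Ideal.span (Set.range fun m => of k M m - 1) := by
  refine le_antisymm (fun f hf => ?_) (Ideal.span_le.2 ?_)
  · simpa [show lift k k M 1 f = 0 from hf] using sub_algebraMap_lift_one_mem_span f
  · rintro _ ⟨m, rfl⟩
    simp

theorem of_sub_one_mem_span_of_mem_closure {X : Type*} (i : X → M) {m : M}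
    (hm : m ∈ Submonoid.closure (Set.range i)) :
    of k M m - 1 ∈ Ideal.span (Set.range fun x => of k M (i x) - 1) := by
  induction hm using Submonoid.closure_induction with
  | mem _ hx =>
    obtain ⟨x, rfl⟩ := hx
    exact Ideal.subset_span ⟨x, rfl⟩
  | one => simp [one_def]
  | mul a b _ _ ha hb =>
    have hmul : of k M (a * b) - 1 = of k M a * (of k M b - 1) + (of k M a - 1) := by
      rw [map_mul]
      noncomm_ring
    rw [hmul]
    exact add_mem (Ideal.mul_mem_left _ _ hb) ha

theorem span_of_sub_one_eq_ker_lift_one {X : Type*} {i : X → M}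
    (hgen : Submonoid.closure (Set.range i) = ⊤) :
    Ideal.span (Set.range fun x => of k M (i x) - 1) =
      RingHom.ker (lift k k M 1).toRingHom := by
  rw [ker_lift_one_eq_span]
  refine le_antisymm (Ideal.span_mono ?_) (Ideal.span_le.2 ?_)
  · rintro _ ⟨x, rfl⟩
    exact ⟨i x, rfl⟩
  · rintro _ ⟨m, rfl⟩
    exact of_sub_one_mem_span_of_mem_closure i (hgen ▸ Submonoid.mem_top m)

end MonoidAlgebra

/-- For a monoid M generated by a set X (via i : X → M), the left ℤM-module
map d₁ : ℤM[X] → ℤM defined on the free module over X by d₁[x] = x − 1 has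
image exactly the augmentation ideal ker ε. Together with the surjectivity of
the augmentation ε, this gives the exact sequence ℤM[X] → ℤM → ℤ → 0. -/
theorem range_d1_eq_augmentation_ideal {M X : Type*} [Monoid M] (i : X → M)
    (hgen : Submonoid.closure (Set.range i) = ⊤) :
    LinearMap.range
        (Finsupp.linearCombination (MonoidAlgebra ℤ M)
          (fun x : X => MonoidAlgebra.of ℤ M (i x) - 1)) =
      RingHom.ker (MonoidAlgebra.lift ℤ ℤ M (1 : M →* ℤ) :
          MonoidAlgebra ℤ M →ₐ[ℤ] ℤ).toRingHom ∧
    Function.Surjective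
      (MonoidAlgebra.lift ℤ ℤ M (1 : M →* ℤ) : MonoidAlgebra ℤ M →ₐ[ℤ] ℤ) := by
  rw [Finsupp.range_linearCombination]
  exact ⟨MonoidAlgebra.span_of_sub_one_eq_ker_lift_one hgen, MonoidAlgebra.lift_one_surjective⟩
end

section
/- Let M be a monoid presented by generators X and relations R. Then the sequence ℤM[R] → ℤM[X] → ℤM → ℤ → 0, with maps the Reidemeister–Fox Jacobian d₂, the map d₁ ([x] ↦ x̄ − 1), and the augmentation ε, is exact. Consequently, every finitely presented monoid is of homological type left-FP₂. -/
/-- The Fox bracket [·] : X* → ℤM[X], defined by [1] = 0 and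
[x·u] = [x] + x̄·[u]. -/
noncomputable def foxBracket {M X : Type*} [Monoid M] (i : X → M) :
    List X → (X →₀ MonoidAlgebra ℤ M)
  | [] => 0
  | x :: u => Finsupp.single x 1 + MonoidAlgebra.of ℤ M (i x) • foxBracket i u

open MonoidAlgebra

noncomputable abbrev augmentation (M : Type*) [Monoid M] : MonoidAlgebra ℤ M →ₐ[ℤ] ℤ :=
  MonoidAlgebra.lift ℤ ℤ M 1

section Fox

variable {M X : Type*} [Monoid M] (i : X → M)

noncomputable abbrev foxD₁ : (X →₀ MonoidAlgebra ℤ M) →ₗ[MonoidAlgebra ℤ M] MonoidAlgebra ℤ M :=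
  Finsupp.linearCombination (MonoidAlgebra ℤ M) (fun x : X => of ℤ M (i x) - 1)

noncomputable abbrev foxD₂ {ρ : Type*} (l r : ρ → List X) :
    (ρ →₀ MonoidAlgebra ℤ M) →ₗ[MonoidAlgebra ℤ M] (X →₀ MonoidAlgebra ℤ M) :=
  Finsupp.linearCombination (MonoidAlgebra ℤ M) (fun a => foxBracket i (l a) - foxBracket i (r a))

lemma foxBracket_append (u v : List X) :
    foxBracket i (u ++ v) = foxBracket i u + of ℤ M (u.map i).prod • foxBracket i v := by
  induction u with
  | nil => simp [foxBracket, ← one_def]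
  | cons x u ih =>
    simp only [List.cons_append, foxBracket, ih, smul_add, smul_smul, List.map_cons,
      List.prod_cons, map_mul, add_assoc]

lemma foxBracket_singleton (x : X) : foxBracket i [x] = Finsupp.single x 1 := by
  simp [foxBracket]

lemma foxD₁_foxBracket (u : List X) : foxD₁ i (foxBracket i u) = of ℤ M (u.map i).prod - 1 := by
  induction u with
  | nil => simp [foxBracket, ← one_def]
  | cons x u ih =>
    rw [foxBracket, map_add, map_smul, ih, Finsupp.linearCombination_single, one_smul,
      smul_sub, smul_eq_mul, smul_eq_mul, mul_one, ← map_mul, List.map_cons, List.prod_cons]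
    abel

lemma foxD₁_single_of (x : X) (m : M) :
    foxD₁ i (Finsupp.single x (of ℤ M m)) = of ℤ M (m * i x) - of ℤ M m := by
  rw [Finsupp.linearCombination_single, smul_eq_mul, mul_sub, mul_one, map_mul]

lemma augmentation_of (m : M) : augmentation M (of ℤ M m) = 1 := by
  simp [lift_single]

lemma sub_augmentation_mem_range_foxD₁
    (hsurj : Function.Surjective (fun u : List X => (u.map i).prod)) (ξ : MonoidAlgebra ℤ M) :
    ξ - algebraMap ℤ _ (augmentation M ξ) ∈ LinearMap.range (foxD₁ i) := by
  induction ξ using MonoidAlgebra.induction_on with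
  | of m =>
    obtain ⟨u, rfl⟩ := hsurj m
    rw [augmentation_of, map_one]
    exact ⟨foxBracket i u, foxD₁_foxBracket i u⟩
  | add ξ η hξ hη =>
    convert Submodule.add_mem _ hξ hη using 1
    simp only [map_add]
    abel
  | smul z ξ hξ =>
    rw [map_smul, map_zsmul, ← smul_sub]
    exact Submodule.smul_of_tower_mem _ z hξ

lemma range_foxD₁_eq_ker_augmentation
    (hsurj : Function.Surjective (fun u : List X => (u.map i).prod)) :
    LinearMap.range (foxD₁ i) = RingHom.ker (augmentation M).toRingHom := by
  apply le_antisymm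
  · rw [Finsupp.range_linearCombination, Submodule.span_le]
    rintro _ ⟨x, rfl⟩
    simp [RingHom.mem_ker]
  · intro ξ (hξ : augmentation M ξ = 0)
    simpa [hξ] using sub_augmentation_mem_range_foxD₁ i hsurj ξ

noncomputable def foxSection (σ : M → List X) : MonoidAlgebra ℤ M →ₗ[ℤ] (X →₀ MonoidAlgebra ℤ M) :=
  (MonoidAlgebra.basis M ℤ).constr ℤ (fun m => foxBracket i (σ m))

lemma foxSection_of (σ : M → List X) (m : M) : foxSection i σ (of ℤ M m) = foxBracket i (σ m) :=
  (MonoidAlgebra.basis M ℤ).constr_basis ℤ _ m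

variable {i}

lemma sub_foxSection_foxD₁_mem {N : Submodule (MonoidAlgebra ℤ M) (X →₀ MonoidAlgebra ℤ M)}
    {σ : M → List X} (hσ : ∀ m, ((σ m).map i).prod = m)
    (hN : ∀ u, foxBracket i u - foxBracket i (σ (u.map i).prod) ∈ N)
    (ξ : X →₀ MonoidAlgebra ℤ M) : ξ - foxSection i σ (foxD₁ i ξ) ∈ N := by
  induction ξ using Finsupp.induction_linear with
  | zero => simp
  | add ξ η hξ hη =>
    convert Submodule.add_mem _ hξ hη using 1
    simp only [map_add]
    abel
  | single x c =>
    induction c using MonoidAlgebra.induction_on with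
    | of m =>
      have hword :
          foxBracket i (σ m ++ [x]) = foxBracket i (σ m) + Finsupp.single x (of ℤ M m) := by
        rw [foxBracket_append, foxBracket_singleton, hσ, Finsupp.smul_single, smul_eq_mul, mul_one]
      have hprod : ((σ m ++ [x]).map i).prod = m * i x := by simp [hσ]
      convert hN (σ m ++ [x]) using 1
      rw [foxD₁_single_of, map_sub, foxSection_of, foxSection_of, hword, hprod]
      abel
    | add c d hc hd =>
      convert Submodule.add_mem _ hc hd using 1
      simp only [Finsupp.single_add, map_add]
      abel
    | smul z c hc =>
      rw [← Finsupp.smul_single, LinearMap.map_smul_of_tower, map_smul, ← smul_sub]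
      exact Submodule.smul_of_tower_mem _ z hc

lemma ker_foxD₁_le {N : Submodule (MonoidAlgebra ℤ M) (X →₀ MonoidAlgebra ℤ M)}
    {σ : M → List X} (hσ : ∀ m, ((σ m).map i).prod = m)
    (hN : ∀ u, foxBracket i u - foxBracket i (σ (u.map i).prod) ∈ N) :
    LinearMap.ker (foxD₁ i) ≤ N := by
  intro ξ (hξ : foxD₁ i ξ = 0)
  simpa [hξ] using sub_foxSection_foxD₁_mem hσ hN ξ

section Relations

variable {ρ : Type*} {l r : ρ → List X}

lemma foxBracket_sub_mem_range_foxD₂_of_stringStep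
    (hlr : ∀ a, ((l a).map i).prod = ((r a).map i).prod) {u v : List X}
    (h : StringStep {p | ∃ a, p = (l a, r a)} u v) :
    foxBracket i u - foxBracket i v ∈ LinearMap.range (foxD₂ i l r) := by
  obtain ⟨p, l', r', s, ⟨a, ha⟩, rfl, rfl⟩ := h
  obtain ⟨rfl, rfl⟩ := Prod.mk.inj ha
  refine ⟨Finsupp.single a (of ℤ M (p.map i).prod), ?_⟩
  -- the terms carried past the relation cancel because `l a` and `r a` have the same image
  rw [Finsupp.linearCombination_single]
  simp only [foxBracket_append, List.map_append, List.prod_append, hlr a, smul_sub]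
  abel

lemma foxBracket_sub_mem_range_foxD₂_of_eqvGen
    (hlr : ∀ a, ((l a).map i).prod = ((r a).map i).prod) {u v : List X}
    (h : Relation.EqvGen (StringStep {p | ∃ a, p = (l a, r a)}) u v) :
    foxBracket i u - foxBracket i v ∈ LinearMap.range (foxD₂ i l r) := by
  induction h with
  | rel u v h => exact foxBracket_sub_mem_range_foxD₂_of_stringStep hlr h
  | refl u => simp
  | symm u v _ ih => simpa using neg_mem ih
  | trans u v w _ _ ih₁ ih₂ => simpa using add_mem ih₁ ih₂

lemma range_foxD₂_le_ker_foxD₁ (hlr : ∀ a, ((l a).map i).prod = ((r a).map i).prod) :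
    LinearMap.range (foxD₂ i l r) ≤ LinearMap.ker (foxD₁ i) := by
  rw [Finsupp.range_linearCombination, Submodule.span_le]
  rintro _ ⟨a, rfl⟩
  simp only [SetLike.mem_coe, LinearMap.mem_ker, map_sub, foxD₁_foxBracket, hlr a, sub_self]

end Relations

end Fox

/-- If M is a monoid presented by generators X and relations R (i.e. the map
X* → M is surjective and identifies two words exactly when they are congruent
modulo the relations), then the sequence
ℤM[R] —d₂→ ℤM[X] —d₁→ ℤM —ε→ ℤ → 0 is exact, where d₂ is the
Reidemeister–Fox Jacobian d₂[α] = [l α] − [r α], d₁[x] = x̄ − 1 and ε is the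
augmentation. In particular (for X and R finite, all these modules being
finitely generated free), every finitely presented monoid is of homological
type left-FP₂. -/
theorem squier_exact_sequence_length_two {M X ρ : Type*} [Monoid M] (i : X → M)
    (l r : ρ → List X)
    (hsurj : Function.Surjective (fun u : List X => (u.map i).prod))
    (hpres : ∀ u v : List X, (u.map i).prod = (v.map i).prod ↔
      Relation.EqvGen
        (StringStep {p : List X × List X | ∃ a : ρ, p = (l a, r a)}) u v) :
    Function.Surjective
        (MonoidAlgebra.lift ℤ ℤ M (1 : M →* ℤ) : MonoidAlgebra ℤ M →ₐ[ℤ] ℤ) ∧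
    LinearMap.range
        (Finsupp.linearCombination (MonoidAlgebra ℤ M)
          (fun x : X => MonoidAlgebra.of ℤ M (i x) - 1)) =
      RingHom.ker (MonoidAlgebra.lift ℤ ℤ M (1 : M →* ℤ) :
          MonoidAlgebra ℤ M →ₐ[ℤ] ℤ).toRingHom ∧
    LinearMap.range
        (Finsupp.linearCombination (MonoidAlgebra ℤ M)
          (fun a : ρ => foxBracket i (l a) - foxBracket i (r a))) =
      LinearMap.ker
        (Finsupp.linearCombination (MonoidAlgebra ℤ M)
          (fun x : X => MonoidAlgebra.of ℤ M (i x) - 1)) := by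
  have hlr : ∀ a, ((l a).map i).prod = ((r a).map i).prod := fun a =>
    (hpres _ _).mpr <| .rel _ _ ⟨[], l a, r a, [], ⟨a, rfl⟩, by simp, by simp⟩
  obtain ⟨σ, hσ⟩ := hsurj.hasRightInverse
  refine ⟨fun z => ⟨algebraMap ℤ _ z, AlgHom.commutes _ z⟩,
    range_foxD₁_eq_ker_augmentation i hsurj,
    le_antisymm (range_foxD₂_le_ker_foxD₁ hlr) (ker_foxD₁_le hσ fun u => ?_)⟩
  exact foxBracket_sub_mem_range_foxD₂_of_eqvGen hlr ((hpres _ _).mp (hσ _).symm)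
end

section
/- The string rewriting system on the alphabet {a, b, t, x, y} with rules a tⁿ b → 1 for all n ∈ ℕ, x a → a t x, x t → t x, x b → b x, x y → 1 is terminating. -/
/-- The alphabet {a, b, t, x, y} of Squier's example. -/
inductive Sq : Type
  | a : Sq
  | b : Sq
  | t : Sq
  | x : Sq
  | y : Sq

open Sq

/-- The rules of Squier's infinite convergent presentation:
a tⁿ b → 1 (n ∈ ℕ), xa → atx, xt → tx, xb → bx, xy → 1. -/
def SqRules : Set (List Sq × List Sq) :=
  {p | (∃ n : ℕ, p = (a :: List.replicate n t ++ [b], [])) ∨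
    p = ([x, a], [a, t, x]) ∨ p = ([x, t], [t, x]) ∨
    p = ([x, b], [b, x]) ∨ p = ([x, y], [])}

/-! Interpret each letter as a strictly monotone map `ℕ → ℕ` and a word `c₁ ⋯ cₖ` as the
composite `w c₁ ∘ ⋯ ∘ w cₖ`. Composing with strictly monotone maps preserves strict inequality,
so if every rule's right side is pointwise below its left side, every rewriting step strictly
decreases the value of the word at `0`. For Squier's rules take `a ↦ n + 2`, `b, t, y ↦ n + 1`
and `x ↦ 2n`: then `a tᵏ b` reads as `n + k + 3`, and the doubling by `x` makes `xa` (`2n + 4`)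
outweigh `atx` (`2n + 3`). -/

section Interpretation

variable {A : Type*} {w : A → ℕ → ℕ}

theorem List.strictMono_foldr (hw : ∀ c, StrictMono (w c)) (u : List A) :
    StrictMono fun m => u.foldr w m := by
  induction u with
  | nil => exact strictMono_id
  | cons c u ih => exact (hw c).comp ih

theorem StringStep.foldr_lt {R : Set (List A × List A)} (hw : ∀ c, StrictMono (w c))
    (hR : ∀ l r, (l, r) ∈ R → ∀ m, r.foldr w m < l.foldr w m) {u v : List A}
    (h : StringStep R u v) (m : ℕ) : v.foldr w m < u.foldr w m := by
  obtain ⟨p, l, r, s, hlr, rfl, rfl⟩ := h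
  simp only [List.foldr_append]
  exact List.strictMono_foldr hw p (hR l r hlr _)

theorem StringStep.wellFounded_flip {R : Set (List A × List A)} (hw : ∀ c, StrictMono (w c))
    (hR : ∀ l r, (l, r) ∈ R → ∀ m, r.foldr w m < l.foldr w m) :
    WellFounded (flip (StringStep R)) :=
  Subrelation.wf (fun h => StringStep.foldr_lt hw hR h 0) (InvImage.wf _ wellFounded_lt)

end Interpretation

def squierWeight : Sq → ℕ → ℕ
  | a, n => n + 2
  | b, n => n + 1
  | t, n => n + 1
  | x, n => 2 * n
  | y, n => n + 1

theorem squierWeight_strictMono (c : Sq) : StrictMono (squierWeight c) := by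
  cases c <;> intro m n hmn <;> simp only [squierWeight] <;> omega

theorem foldr_squierWeight_replicate_t_b (k n : ℕ) :
    (List.replicate k t ++ [b]).foldr squierWeight n = n + k + 1 := by
  induction k with
  | zero => rfl
  | succ k ih =>
    rw [List.replicate_succ, List.cons_append, List.foldr_cons, ih]
    simp only [squierWeight]
    omega

theorem foldr_squierWeight_lt_of_mem_sqRules {l r : List Sq} (h : (l, r) ∈ SqRules) (n : ℕ) :
    r.foldr squierWeight n < l.foldr squierWeight n := by
  rcases h with ⟨k, hk⟩ | hk | hk | hk | hk <;> simp only [Prod.mk.injEq] at hk <;>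
    obtain ⟨rfl, rfl⟩ := hk
  · simp only [List.cons_append, List.foldr_cons, foldr_squierWeight_replicate_t_b, List.foldr_nil,
      squierWeight]
    omega
  all_goals simp only [List.foldr_cons, List.foldr_nil, squierWeight]; omega

/-- Squier's string rewriting system is terminating: there is no infinite
sequence of rewriting steps. -/
theorem squier_system_terminating :
    ¬ ∃ f : ℕ → List Sq, ∀ n : ℕ, StringStep SqRules (f n) (f (n + 1)) := by
  rintro ⟨f, hf⟩
  have hwf := StringStep.wellFounded_flip squierWeight_strictMono
    fun _ _ => foldr_squierWeight_lt_of_mem_sqRules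
  obtain ⟨n, hn⟩ := @WellFounded.not_rel_apply_succ _ _ ⟨hwf⟩ f
  exact hn (hf n)
end

section
/- In the monoid S₁ presented by ⟨a, b, t, x, y ∣ ab = 1, xa = atx, xt = tx, xb = bx, xy = 1⟩, the relation a tⁿ b = 1 holds for every natural number n. -/
open Sq

/-- The finite presentation of Squier's monoid S₁:
ab = 1, xa = atx, xt = tx, xb = bx, xy = 1. -/
def S1Rules : Set (List Sq × List Sq) :=
  {([a, b], []), ([x, a], [a, t, x]), ([x, t], [t, x]),
    ([x, b], [b, x]), ([x, y], [])}

/-!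
By induction on `n`: using `xa = atx`, `xt = tx` and `xb = bx`, the letter `x` passes through
the word, `x · a tⁿ b · y = a tⁿ⁺¹ b · x y`, so
`a tⁿ⁺¹ b = a tⁿ⁺¹ b · x y = x · a tⁿ b · y = x y = 1`.
-/

namespace StringStep

variable {A : Type*} {R : Set (List A × List A)}

theorem append_append {u v : List A} (h : StringStep R u v) (p s : List A) :
    StringStep R (p ++ u ++ s) (p ++ v ++ s) := by
  obtain ⟨p', l, r, s', hlr, rfl, rfl⟩ := h
  exact ⟨p ++ p', l, r, s' ++ s, hlr, by simp, by simp⟩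

theorem eqvGen_append_append {u v : List A} (h : Relation.EqvGen (StringStep R) u v)
    (p s : List A) : Relation.EqvGen (StringStep R) (p ++ u ++ s) (p ++ v ++ s) := by
  induction h with
  | rel u v h => exact .rel _ _ (h.append_append p s)
  | refl u => exact .refl _
  | symm u v _ ih => exact ih.symm
  | trans u v w _ _ ih₁ ih₂ => exact ih₁.trans _ _ _ ih₂

theorem eqvGen_of_mem {l r : List A} (h : (l, r) ∈ R) (p s : List A) :
    Relation.EqvGen (StringStep R) (p ++ l ++ s) (p ++ r ++ s) :=
  .rel _ _ ⟨p, l, r, s, h, rfl, rfl⟩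

end StringStep

open StringStep

local infix:50 " ≈₁ " => Relation.EqvGen (StringStep S1Rules)

theorem x_replicate_t_equiv (n : ℕ) (s : List Sq) :
    x :: List.replicate n t ++ s ≈₁ List.replicate n t ++ x :: s := by
  induction n generalizing s with
  | zero => exact .refl _
  | succ n ih =>
    have hxt : List.replicate n t ++ x :: t :: s ≈₁ List.replicate n t ++ t :: x :: s := by
      simpa using eqvGen_of_mem (by simp [S1Rules] : ([x, t], [t, x]) ∈ S1Rules)
        (List.replicate n t) s
    simpa [List.replicate_succ'] using (ih (t :: s)).trans _ _ _ hxt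

/-- In the monoid S₁ presented by ⟨a, b, t, x, y ∣ ab = 1, xa = atx, xt = tx,
xb = bx, xy = 1⟩, the relation a tⁿ b = 1 holds for every n : the words
a tⁿ b and 1 are identified by the congruence generated by the relations. -/
theorem atnb_eq_one_in_S1 :
    ∀ n : ℕ, Relation.EqvGen (StringStep S1Rules)
      (a :: List.replicate n t ++ [b]) [] := by
  have hab := eqvGen_of_mem (by simp [S1Rules] : ([a, b], []) ∈ S1Rules)
  have hxa := eqvGen_of_mem (by simp [S1Rules] : ([x, a], [a, t, x]) ∈ S1Rules)
  have hxb := eqvGen_of_mem (by simp [S1Rules] : ([x, b], [b, x]) ∈ S1Rules)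
  have hxy := eqvGen_of_mem (by simp [S1Rules] : ([x, y], []) ∈ S1Rules)
  intro n
  induction n with
  | zero => simpa using hab [] []
  | succ n ih =>
    set T := List.replicate n t
    rw [List.replicate_succ]
    calc a :: t :: T ++ [b]
        ≈₁ a :: t :: T ++ [b, x, y] := by simpa using (hxy (a :: t :: T ++ [b]) []).symm
      _ ≈₁ a :: t :: T ++ [x, b, y] := by simpa using (hxb (a :: t :: T) [y]).symm
      _ ≈₁ a :: t :: x :: T ++ [b, y] := by
        simpa using (eqvGen_append_append (x_replicate_t_equiv n [b, y]) [a, t] []).symm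
      _ ≈₁ x :: a :: T ++ [b, y] := by simpa using (hxa [] (T ++ [b, y])).symm
      _ ≈₁ [x, y] := by simpa using eqvGen_append_append ih [x] [y]
      _ ≈₁ [] := by simpa using hxy [] []
end
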